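/- arXiv:1306.0157 — 2 statements merged into one kernel-verified Lean document; each statement's English description precedes it below -/
import Mathlib

section
/- Suppose X ≥ 0 with mean a ∈ (0,∞) admits a c-bounded size bias coupling. Then for all 0 ≤ x ≤ a, P(X ≤ x) ≤ (a/x)^{x/c} e^{(x−a)/c}. -/
/-!
Write `m(t) = E[exp(tX)]` for `t ≤ 0`. The size-bias identity with the bounded test function
`exp(t·max(·,0))` and the coupling `Y ≤ X + c` give
`m'(t) = E[X e^{tX}] = a·E[e^{tY}] ≥ a e^{tc} m(t)`, and integrating this differential
inequality back from `m(0) = 1` yields `m(t) ≤ exp(a(e^{tc} - 1)/c)`. Chernoff's bound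
`P(X ≤ x) ≤ e^{-tx} m(t)` at `t = log(x/a)/c` is the claim; for `x = 0` let `t → -∞` instead.
-/

open MeasureTheory Real ProbabilityTheory Set Filter Topology

theorem le_mul_exp_sub_of_mul_le_deriv {f f' K K' : ℝ → ℝ} {b : ℝ}
    (hf : ContinuousOn f (Iic b)) (hf' : ∀ t < b, HasDerivAt f (f' t) t)
    (hK : ∀ t, HasDerivAt K (K' t) t) (hle : ∀ t < b, K' t * f t ≤ f' t)
    {t : ℝ} (ht : t ≤ b) : f t ≤ f b * exp (K t - K b) := by
  have hg : ∀ u < b, HasDerivAt (fun u => f u * exp (-K u))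
      (exp (-K u) * (f' u - K' u * f u)) u := fun u hu =>
    ((hf' u hu).fun_mul (hK u).fun_neg.exp).congr_deriv (by ring)
  have hKc : Continuous K := continuous_iff_continuousAt.mpr fun u => (hK u).continuousAt
  have hmono : MonotoneOn (fun u => f u * exp (-K u)) (Iic b) := by
    refine monotoneOn_of_deriv_nonneg (convex_Iic b)
      (hf.mul (hKc.neg.rexp.continuousOn)) ?_ ?_
    all_goals rw [interior_Iic]
    · exact fun u hu => (hg u hu).differentiableAt.differentiableWithinAt
    · intro u hu
      rw [(hg u hu).deriv]
      exact mul_nonneg (exp_pos _).le (sub_nonneg.mpr (hle u hu))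
  have hfg : f t * exp (-K t) ≤ f b * exp (-K b) := hmono ht self_mem_Iic ht
  calc f t = f t * exp (-K t) * exp (K t) := by rw [mul_assoc, ← exp_add]; simp
    _ ≤ f b * exp (-K b) * exp (K t) := by gcongr
    _ = f b * exp (K t - K b) := by rw [mul_assoc, ← exp_add]; ring_nf

theorem le_exp_neg_div_of_forall_le_exp {p a c : ℝ} (hc : 0 < c)
    (h : ∀ t ≤ 0, p ≤ exp (a * (exp (t * c) - 1) / c)) : p ≤ exp (-a / c) := by
  have hlim : Tendsto (fun t => exp (a * (exp (t * c) - 1) / c)) atBot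
      (𝓝 (exp (a * (0 - 1) / c))) :=
    ((((tendsto_exp_atBot.comp (tendsto_id.atBot_mul_const hc)).sub_const 1).const_mul
      a).div_const c).rexp
  rw [show -a / c = a * (0 - 1) / c by ring]
  exact ge_of_tendsto hlim (eventually_atBot.mpr ⟨0, h⟩)

section SizeBias

variable {Ω : Type*} [MeasurableSpace Ω] {μ : Measure Ω} {X Y : Ω → ℝ} {a c t : ℝ}

def IsSizeBias (μ : Measure Ω) (X Y : Ω → ℝ) (a : ℝ) : Prop :=
  ∀ g : ℝ → ℝ, Measurable g → (∃ C, ∀ x, |g x| ≤ C) →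
    ∫ ω, g (Y ω) ∂μ = (∫ ω, X ω * g (X ω) ∂μ) / a

variable [IsFiniteMeasure μ]

theorem integrable_exp_mul_of_nonneg_of_nonpos (hX : AEMeasurable X μ)
    (hXnn : ∀ᵐ ω ∂μ, 0 ≤ X ω) (ht : t ≤ 0) : Integrable (fun ω => exp (t * X ω)) μ := by
  refine (integrable_const (1 : ℝ)).mono' (measurable_exp.comp_aemeasurable
    (hX.const_mul t)).aestronglyMeasurable ?_
  filter_upwards [hXnn] with ω hω
  rw [norm_of_nonneg (exp_pos _).le, exp_le_one_iff]
  exact mul_nonpos_of_nonpos_of_nonneg ht hω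

theorem continuousOn_mgf_Iic_zero (hX : AEMeasurable X μ) (hXnn : ∀ᵐ ω ∂μ, 0 ≤ X ω) :
    ContinuousOn (mgf X μ) (Iic 0) := by
  refine continuousOn_of_dominated (bound := fun _ => 1)
    (fun t _ => (measurable_exp.comp_aemeasurable (hX.const_mul t)).aestronglyMeasurable)
    (fun t ht => ?_) (integrable_const 1)
    (ae_of_all _ fun ω => (continuous_exp.comp (continuous_id.mul continuous_const)).continuousOn)
  filter_upwards [hXnn] with ω hω
  rw [norm_of_nonneg (exp_pos _).le, exp_le_one_iff]
  exact mul_nonpos_of_nonpos_of_nonneg ht hω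

theorem hasDerivAt_mgf_of_nonneg_of_neg (hX : AEMeasurable X μ) (hXnn : ∀ᵐ ω ∂μ, 0 ≤ X ω)
    (ht : t < 0) : HasDerivAt (mgf X μ) μ[fun ω ↦ X ω * exp (t * X ω)] t := by
  refine hasDerivAt_mgf (interior_mono (fun s hs => ?_) (by rwa [interior_Iic]))
  exact integrable_exp_mul_of_nonneg_of_nonpos hX hXnn hs

theorem mul_exp_mul_mgf_le_of_isSizeBias (hsb : IsSizeBias μ X Y a) (ha : 0 < a)
    (hX : AEMeasurable X μ) (hY : AEMeasurable Y μ) (hXnn : ∀ᵐ ω ∂μ, 0 ≤ X ω) (hc : 0 ≤ c)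
    (hcoup : ∀ᵐ ω ∂μ, Y ω ≤ X ω + c) (ht : t ≤ 0) :
    a * exp (t * c) * mgf X μ t ≤ μ[fun ω => X ω * exp (t * X ω)] := by
  set g : ℝ → ℝ := fun w => exp (t * max w 0)
  have hgm : Measurable g := by fun_prop
  have hg_le_one (w : ℝ) : ‖g w‖ ≤ 1 := by
    rw [norm_of_nonneg (exp_pos _).le, exp_le_one_iff]
    exact mul_nonpos_of_nonpos_of_nonneg ht (le_max_right _ _)
  have hgY : Integrable (fun ω => g (Y ω)) μ :=
    (integrable_const (1 : ℝ)).mono' (hgm.comp_aemeasurable hY).aestronglyMeasurable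
      (ae_of_all _ fun ω => hg_le_one (Y ω))
  have hXg : ∫ ω, X ω * g (X ω) ∂μ = μ[fun ω => X ω * exp (t * X ω)] := by
    refine integral_congr_ae ?_
    filter_upwards [hXnn] with ω hω
    simp only [g, max_eq_left hω]
  have hlow : exp (t * c) * mgf X μ t ≤ ∫ ω, g (Y ω) ∂μ := by
    rw [mgf, ← integral_const_mul]
    refine integral_mono_ae
      ((integrable_exp_mul_of_nonneg_of_nonpos hX hXnn ht).const_mul _) hgY ?_
    filter_upwards [hXnn, hcoup] with ω hXω hYω
    rw [← exp_add, exp_le_exp, ← mul_add, add_comm]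
    exact mul_le_mul_of_nonpos_left (max_le hYω (by linarith)) ht
  rw [hsb g hgm ⟨1, hg_le_one⟩, hXg, le_div_iff₀ ha] at hlow
  linarith

variable [IsProbabilityMeasure μ]

theorem mgf_le_exp_of_isSizeBias (hsb : IsSizeBias μ X Y a) (ha : 0 < a)
    (hX : AEMeasurable X μ) (hY : AEMeasurable Y μ) (hXnn : ∀ᵐ ω ∂μ, 0 ≤ X ω) (hc : 0 < c)
    (hcoup : ∀ᵐ ω ∂μ, Y ω ≤ X ω + c) (ht : t ≤ 0) :
    mgf X μ t ≤ exp (a * (exp (t * c) - 1) / c) := by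
  have hK (u : ℝ) : HasDerivAt (fun u => a * exp (u * c) / c) (a * exp (u * c)) u :=
    (((hasDerivAt_mul_const c).exp.const_mul a).div_const c).congr_deriv (by field_simp)
  have := le_mul_exp_sub_of_mul_le_deriv (continuousOn_mgf_Iic_zero hX hXnn)
    (fun u hu => hasDerivAt_mgf_of_nonneg_of_neg hX hXnn hu) hK
    (fun u hu => mul_exp_mul_mgf_le_of_isSizeBias hsb ha hX hY hXnn hc.le hcoup hu.le) ht
  rw [mgf_zero, one_mul] at this
  convert this using 2
  simp only [zero_mul, exp_zero]
  ring

theorem measureReal_le_le_exp_of_isSizeBias (hsb : IsSizeBias μ X Y a) (ha : 0 < a)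
    (hX : AEMeasurable X μ) (hY : AEMeasurable Y μ) (hXnn : ∀ᵐ ω ∂μ, 0 ≤ X ω) (hc : 0 < c)
    (hcoup : ∀ᵐ ω ∂μ, Y ω ≤ X ω + c) (x : ℝ) (ht : t ≤ 0) :
    μ.real {ω | X ω ≤ x} ≤ exp (-t * x + a * (exp (t * c) - 1) / c) := by
  rw [exp_add]
  refine (measure_le_le_exp_mul_mgf x ht
    (integrable_exp_mul_of_nonneg_of_nonpos hX hXnn ht)).trans ?_
  gcongr
  exact mgf_le_exp_of_isSizeBias hsb ha hX hY hXnn hc hcoup ht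

end SizeBias

theorem stmt_10_general
    {Ω : Type*} [MeasurableSpace Ω] (μ : Measure Ω) [IsProbabilityMeasure μ]
    (X Y : Ω → ℝ) (a c : ℝ) (ha : 0 < a) (hc : 0 < c)
    (hXm : Measurable X) (hYm : Measurable Y)
    (hXnn : ∀ᵐ ω ∂μ, 0 ≤ X ω)
    (hsb : ∀ g : ℝ → ℝ, Measurable g → (∃ C, ∀ x, |g x| ≤ C) →
        ∫ ω, g (Y ω) ∂μ = (∫ ω, X ω * g (X ω) ∂μ) / a)
    (hcoup : ∀ᵐ ω ∂μ, Y ω ≤ X ω + c) :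
    ∀ x : ℝ, 0 ≤ x → x ≤ a →
      (μ {ω | X ω ≤ x}).toReal ≤ (a / x) ^ (x / c) * Real.exp ((x - a) / c) := by
  intro x hx hxa
  change μ.real {ω | X ω ≤ x} ≤ _
  have hbound (t : ℝ) (ht : t ≤ 0) := measureReal_le_le_exp_of_isSizeBias hsb ha
    hXm.aemeasurable hYm.aemeasurable hXnn hc hcoup x ht
  rcases hx.eq_or_lt with rfl | hx
  · rw [zero_div, rpow_zero, one_mul, zero_sub]
    exact le_exp_neg_div_of_forall_le_exp hc fun t ht => by simpa using hbound t ht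
  · have hxa' : 0 < x / a := div_pos hx ha
    have ht : log (x / a) / c ≤ 0 := div_nonpos_of_nonpos_of_nonneg
      (log_nonpos hxa'.le ((div_le_one ha).mpr hxa)) hc.le
    convert hbound _ ht using 1
    rw [rpow_def_of_pos (div_pos ha hx), ← exp_add, div_mul_cancel₀ _ hc.ne',
      exp_log hxa', ← inv_div, log_inv]
    field_simp

theorem stmt_10
    {Ω : Type*} [MeasurableSpace Ω] (μ : Measure Ω) [IsProbabilityMeasure μ]
    (X Y : Ω → ℝ) (a c : ℝ) (ha : 0 < a) (hc : 0 < c)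
    (hXm : Measurable X) (hYm : Measurable Y)
    (hXnn : ∀ᵐ ω ∂μ, 0 ≤ X ω)
    (hXint : Integrable X μ)
    (hmean : ∫ ω, X ω ∂μ = a)
    (hsb : ∀ g : ℝ → ℝ, Measurable g → (∃ C, ∀ x, |g x| ≤ C) →
        ∫ ω, g (Y ω) ∂μ = (∫ ω, X ω * g (X ω) ∂μ) / a)
    (hcoup : ∀ᵐ ω ∂μ, Y ω ≤ X ω + c) :
    ∀ x : ℝ, 0 ≤ x → x ≤ a →
      (μ {ω | X ω ≤ x}).toReal ≤ (a / x) ^ (x / c) * Real.exp ((x - a) / c) :=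
  stmt_10_general μ X Y a c ha hc hXm hYm hXnn hsb hcoup
end

section
/- Sandwich principle: Let X, Y, Z be real random variables with F_Z(t) ≤ F_Y(t) ≤ F_X(t) for all t. If there exists a coupling of X and Z with |Z − X| ≤ c almost surely, then there exists a coupling of X and Y with Y ∈ [X, X+c] almost surely. -/
/-!
Quantile coupling: for `U` uniform on `(0, 1)` put `X' = F_X⁻¹(U)` and `Y' = F_Y⁻¹(U)`.
The coupling of `X` and `Z` gives `F_X(t) ≤ F_Z(t + c) ≤ F_Y(t + c)`, and together with
`F_Y ≤ F_X` this yields `F_X⁻¹ ≤ F_Y⁻¹ ≤ F_X⁻¹ + c` pointwise on `(0, 1)`, since the generalized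
inverse satisfies `F⁻¹(u) ≤ x ↔ u ≤ F(x)`.
-/

open MeasureTheory Set Filter ProbabilityTheory
open scoped Topology

-- Makes `volume : Measure (Ioo 0 1)` the uniform law on `(0, 1)`.
attribute [local instance] Measure.Subtype.measureSpace

/-- The quantile function of `ν`; its values outside `(0, 1)` are junk. -/
noncomputable def quantile (ν : Measure ℝ) (u : ℝ) : ℝ := sInf {x | u ≤ cdf ν x}

section Quantile

variable {ν : Measure ℝ} {u : ℝ}

lemma bddBelow_setOf_le_cdf (hu : 0 < u) : BddBelow {x | u ≤ cdf ν x} := by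
  obtain ⟨y, hy⟩ :=
    ((tendsto_cdf_atBot ν).eventually (eventually_lt_nhds hu)).exists_forall_of_atBot
  exact ⟨y, fun x hx => le_of_not_gt fun hxy => (hx.trans_lt (hy x hxy.le)).false⟩

lemma nonempty_setOf_le_cdf (hu : u < 1) : {x | u ≤ cdf ν x}.Nonempty :=
  (((tendsto_cdf_atTop ν).eventually (eventually_gt_nhds hu)).exists).imp fun _ => le_of_lt

lemma le_cdf_quantile (hu : u ∈ Ioo 0 1) : u ≤ cdf ν (quantile ν u) := by
  have hright : Tendsto (cdf ν) (𝓝[>] (quantile ν u)) (𝓝 (cdf ν (quantile ν u))) :=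
    ((cdf ν).right_continuous _).tendsto.mono_left (nhdsWithin_mono _ Ioi_subset_Ici_self)
  refine ge_of_tendsto hright (eventually_mem_nhdsWithin.mono fun z hz => ?_)
  obtain ⟨x, hx, hxz⟩ :=
    (csInf_lt_iff (bddBelow_setOf_le_cdf hu.1) (nonempty_setOf_le_cdf hu.2)).1 hz
  exact hx.trans (monotone_cdf ν hxz.le)

lemma quantile_le_iff (hu : u ∈ Ioo 0 1) {x : ℝ} : quantile ν u ≤ x ↔ u ≤ cdf ν x :=
  ⟨fun h => (le_cdf_quantile hu).trans (monotone_cdf ν h),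
    csInf_le (bddBelow_setOf_le_cdf hu.1)⟩

lemma monotoneOn_quantile : MonotoneOn (quantile ν) (Ioo 0 1) := fun _ hu _ hv huv =>
  (quantile_le_iff hu).2 (huv.trans (le_cdf_quantile hv))

lemma quantile_le_quantile_add {ν' : Measure ℝ} {a : ℝ} (h : ∀ x, cdf ν x ≤ cdf ν' (x + a))
    (hu : u ∈ Ioo 0 1) : quantile ν' u ≤ quantile ν u + a :=
  (quantile_le_iff hu).2 ((le_cdf_quantile hu).trans (h _))

lemma quantile_le_quantile {ν' : Measure ℝ} (h : ∀ x, cdf ν x ≤ cdf ν' x) (hu : u ∈ Ioo 0 1) :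
    quantile ν' u ≤ quantile ν u := by
  simpa using quantile_le_quantile_add (a := 0) (by simpa using h) hu

end Quantile

instance isProbabilityMeasure_volume_Ioo_zero_one :
    IsProbabilityMeasure (volume : Measure (Ioo (0 : ℝ) 1)) := by
  constructor
  rw [Measure.Subtype.volume_univ measurableSet_Ioo.nullMeasurableSet, Real.volume_Ioo]
  norm_num

lemma volume_Iic_inter_Ioo_zero_one {p : ℝ} (h1 : p ≤ 1) :
    volume (Iic p ∩ Ioo 0 1) = ENNReal.ofReal p := by
  refine le_antisymm ?_ ?_
  · calc volume (Iic p ∩ Ioo 0 1) ≤ volume (Ioc 0 p) :=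
          measure_mono fun u hu => ⟨hu.2.1, hu.1⟩
      _ = ENNReal.ofReal p := by rw [Real.volume_Ioc, sub_zero]
  · calc ENNReal.ofReal p = volume (Ioo 0 p) := by rw [Real.volume_Ioo, sub_zero]
      _ ≤ volume (Iic p ∩ Ioo 0 1) :=
          measure_mono fun u hu => ⟨hu.2.le, hu.1, hu.2.trans_le h1⟩

lemma measurable_domRestrict_quantile (ν : Measure ℝ) :
    Measurable ((Ioo 0 1).domRestrict (quantile ν)) :=
  (monotoneOn_iff_monotone.1 monotoneOn_quantile).measurable

lemma map_domRestrict_quantile (ν : Measure ℝ) [IsProbabilityMeasure ν] :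
    (volume : Measure (Ioo (0 : ℝ) 1)).map ((Ioo 0 1).domRestrict (quantile ν)) = ν := by
  have := Measure.isProbabilityMeasure_map (μ := (volume : Measure (Ioo (0 : ℝ) 1)))
    (measurable_domRestrict_quantile ν).aemeasurable
  refine Measure.ext_of_Iic _ _ fun x => ?_
  have hpre : (Ioo 0 1).domRestrict (quantile ν) ⁻¹' Iic x = Subtype.val ⁻¹' Iic (cdf ν x) :=
    Set.ext fun u => quantile_le_iff u.2
  rw [Measure.map_apply (measurable_domRestrict_quantile ν) measurableSet_Iic, hpre,
    volume_preimage_coe measurableSet_Ioo.nullMeasurableSet measurableSet_Iic,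
    volume_Iic_inter_Ioo_zero_one (cdf_le_one ν x), ofReal_cdf]

section Coupling

variable {Ω : Type*} [MeasurableSpace Ω] {μ : Measure Ω}

lemma cdf_map_eq_toReal {X : Ω → ℝ} (hX : Measurable X) [IsProbabilityMeasure (μ.map X)]
    (t : ℝ) :
    cdf (μ.map X) t = (μ {ω | X ω ≤ t}).toReal := by
  rw [cdf_eq_real, measureReal_def, Measure.map_apply hX measurableSet_Iic]
  rfl

lemma cdf_map_le_cdf_map_add [IsProbabilityMeasure μ] {X Z : Ω → ℝ} (hX : Measurable X)
    (hZ : Measurable Z) {c : ℝ} (h : ∀ᵐ ω ∂μ, Z ω ≤ X ω + c) (t : ℝ) :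
    cdf (μ.map X) t ≤ cdf (μ.map Z) (t + c) := by
  have := Measure.isProbabilityMeasure_map (μ := μ) hX.aemeasurable
  have := Measure.isProbabilityMeasure_map (μ := μ) hZ.aemeasurable
  rw [cdf_map_eq_toReal hX, cdf_map_eq_toReal hZ]
  refine ENNReal.toReal_mono (measure_ne_top _ _) (measure_mono_ae ?_)
  filter_upwards [h] with ω hω hXt
  exact show Z ω ≤ t + c by linarith [show X ω ≤ t from hXt]

end Coupling

theorem stmt_18_general
    {Ω₁ Ω₂ Ω₃ : Type*} [MeasurableSpace Ω₁] [MeasurableSpace Ω₂] [MeasurableSpace Ω₃]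
    (μ₁ : Measure Ω₁) (μ₂ : Measure Ω₂) (μ₃ : Measure Ω₃)
    [IsProbabilityMeasure μ₂]
    (X : Ω₁ → ℝ) (Y : Ω₂ → ℝ) (Z : Ω₃ → ℝ)
    (hX : Measurable X) (hY : Measurable Y) (hZ : Measurable Z)
    (c : ℝ)
    (hcdf : ∀ t : ℝ,
      (μ₃ {ω | Z ω ≤ t}).toReal ≤ (μ₂ {ω | Y ω ≤ t}).toReal ∧
        (μ₂ {ω | Y ω ≤ t}).toReal ≤ (μ₁ {ω | X ω ≤ t}).toReal)
    (hcoup : ∃ (Ω : Type) (_ : MeasurableSpace Ω) (μ : Measure Ω),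
      IsProbabilityMeasure μ ∧
        ∃ X' Z' : Ω → ℝ, Measurable X' ∧ Measurable Z' ∧
          Measure.map X' μ = Measure.map X μ₁ ∧
          Measure.map Z' μ = Measure.map Z μ₃ ∧
          μ {ω | |Z' ω - X' ω| ≤ c} = 1) :
    ∃ (Ω : Type) (_ : MeasurableSpace Ω) (μ : Measure Ω),
      IsProbabilityMeasure μ ∧
        ∃ X' Y' : Ω → ℝ, Measurable X' ∧ Measurable Y' ∧
          Measure.map X' μ = Measure.map X μ₁ ∧
          Measure.map Y' μ = Measure.map Y μ₂ ∧
          μ {ω | X' ω ≤ Y' ω ∧ Y' ω ≤ X' ω + c} = 1 := by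
  obtain ⟨Ω, _, μ, _, X', Z', hX', hZ', hX'law, hZ'law, hclose⟩ := hcoup
  have : IsProbabilityMeasure (μ₁.map X) :=
    hX'law ▸ Measure.isProbabilityMeasure_map hX'.aemeasurable
  have : IsProbabilityMeasure (μ₂.map Y) := Measure.isProbabilityMeasure_map hY.aemeasurable
  have : IsProbabilityMeasure (μ₃.map Z) :=
    hZ'law ▸ Measure.isProbabilityMeasure_map hZ'.aemeasurable
  have hZX : ∀ᵐ ω ∂μ, Z' ω ≤ X' ω + c := by
    have hclose_ae : ∀ᵐ ω ∂μ, |Z' ω - X' ω| ≤ c :=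
      (mem_ae_iff_prob_eq_one (measurableSet_le (hZ'.sub hX').abs measurable_const)).2 hclose
    filter_upwards [hclose_ae] with ω hω using by linarith [(abs_le.1 hω).2]
  have hYX : ∀ x, cdf (μ₂.map Y) x ≤ cdf (μ₁.map X) x := fun x => by
    rw [cdf_map_eq_toReal hY, cdf_map_eq_toReal hX]
    exact (hcdf x).2
  have hXY : ∀ x, cdf (μ₁.map X) x ≤ cdf (μ₂.map Y) (x + c) := fun x =>
    calc cdf (μ₁.map X) x = cdf (μ.map X') x := by rw [hX'law]
      _ ≤ cdf (μ.map Z') (x + c) := cdf_map_le_cdf_map_add hX' hZ' hZX x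
      _ = (μ₃ {ω | Z ω ≤ x + c}).toReal := by rw [hZ'law, cdf_map_eq_toReal hZ]
      _ ≤ cdf (μ₂.map Y) (x + c) := by rw [cdf_map_eq_toReal hY]; exact (hcdf _).1
  refine ⟨Ioo (0 : ℝ) 1, inferInstance, volume, inferInstance, _, _,
    measurable_domRestrict_quantile _, measurable_domRestrict_quantile _,
    map_domRestrict_quantile _, map_domRestrict_quantile _, ?_⟩
  have hsandwich : ∀ u : Ioo (0 : ℝ) 1, quantile (μ₁.map X) u ≤ quantile (μ₂.map Y) u ∧
      quantile (μ₂.map Y) u ≤ quantile (μ₁.map X) u + c := fun u =>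
    ⟨quantile_le_quantile hYX u.2, quantile_le_quantile_add hXY u.2⟩
  exact (congrArg volume (eq_univ_of_forall hsandwich)).trans measure_univ

theorem stmt_18
    {Ω₁ Ω₂ Ω₃ : Type*} [MeasurableSpace Ω₁] [MeasurableSpace Ω₂] [MeasurableSpace Ω₃]
    (μ₁ : Measure Ω₁) (μ₂ : Measure Ω₂) (μ₃ : Measure Ω₃)
    [IsProbabilityMeasure μ₁] [IsProbabilityMeasure μ₂] [IsProbabilityMeasure μ₃]
    (X : Ω₁ → ℝ) (Y : Ω₂ → ℝ) (Z : Ω₃ → ℝ)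
    (hX : Measurable X) (hY : Measurable Y) (hZ : Measurable Z)
    (c : ℝ) (hc : 0 < c)
    (hcdf : ∀ t : ℝ,
      (μ₃ {ω | Z ω ≤ t}).toReal ≤ (μ₂ {ω | Y ω ≤ t}).toReal ∧
        (μ₂ {ω | Y ω ≤ t}).toReal ≤ (μ₁ {ω | X ω ≤ t}).toReal)
    (hcoup : ∃ (Ω : Type) (_ : MeasurableSpace Ω) (μ : Measure Ω),
      IsProbabilityMeasure μ ∧
        ∃ X' Z' : Ω → ℝ, Measurable X' ∧ Measurable Z' ∧
          Measure.map X' μ = Measure.map X μ₁ ∧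
          Measure.map Z' μ = Measure.map Z μ₃ ∧
          μ {ω | |Z' ω - X' ω| ≤ c} = 1) :
    ∃ (Ω : Type) (_ : MeasurableSpace Ω) (μ : Measure Ω),
      IsProbabilityMeasure μ ∧
        ∃ X' Y' : Ω → ℝ, Measurable X' ∧ Measurable Y' ∧
          Measure.map X' μ = Measure.map X μ₁ ∧
          Measure.map Y' μ = Measure.map Y μ₂ ∧
          μ {ω | X' ω ≤ Y' ω ∧ Y' ω ≤ X' ω + c} = 1 :=
  stmt_18_general μ₁ μ₂ μ₃ X Y Z hX hY hZ c hcdf hcoup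
end
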